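/- (Theorem 3, Heisenberg uncertainty relations) Define ⟨Δx⟩² := (1/16)·Σ_{n=4q}^{4q+3} Σ_{j=1}^{4} ((r^j_n − r̃_n)_x)² and ⟨Δp_x⟩² := (1/16)·Σ_{n=4q}^{4q+3} Σ_{j=1}^{4} ((p^j_n − mṽ)_x)². Then for every ε > 0 and for both s = s⁺ and s = s⁻: ⟨Δx⟩² = ℏε/(2m), ⟨Δp_x⟩² = ℏm/(2ε), and hence the product of standard deviations satisfies ⟨Δx⟩·⟨Δp_x⟩ = ℏ/2. -/

import Mathlib

noncomputable section

open Finset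

open Fin.NatCast

/-- The four vertices of the unit square in `ℝ²`. -/
def uR : Fin 4 → EuclideanSpace ℝ (Fin 2) :=
  ![(WithLp.equiv 2 (Fin 2 → ℝ)).symm ![1, 1],
    (WithLp.equiv 2 (Fin 2 → ℝ)).symm ![1, -1],
    (WithLp.equiv 2 (Fin 2 → ℝ)).symm ![-1, -1],
    (WithLp.equiv 2 (Fin 2 → ℝ)).symm ![-1, 1]]

/-- `sPlusIter n j = (s⁺)ⁿ u^j` for the cyclic permutation `s⁺` with
`s⁺u¹ = u², s⁺u² = u³, s⁺u³ = u⁴, s⁺u⁴ = u¹`. -/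
def sPlusIter (n : ℕ) (j : Fin 4) : EuclideanSpace ℝ (Fin 2) := uR (j + (n : Fin 4))

/-- `sMinusIter n j = (s⁻)ⁿ u^j` for the inverse permutation `s⁻`. -/
def sMinusIter (n : ℕ) (j : Fin 4) : EuclideanSpace ℝ (Fin 2) := uR (j - (n : Fin 4))

/-! Write `a = √(ℏε/(4m))` and `f j = (u^j)_x`. The position deviations are
`a (f (j + c) - f j)` for the current rotation `c`, and one period `n = 4q, …, 4q+3` runs through
every rotation, so `16⟨Δx⟩² = a² ∑_c ∑_j (f (j + c) - f j)² = a² (2·4 ∑ f² - 2 (∑ f)²) = 32 a²`,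
since `f = ±1` and the square is centred. Each momentum deviation is `(m/ε) a` times the
displacement under a single rotation, which contributes `8` at every time step, so
`16⟨Δp_x⟩² = 32 (m/ε)² a²`. Shifting by `-c` instead of `c` does not change these sums, which
handles `s⁻`. -/

section ShiftSum

variable {G : Type*} [AddCommGroup G] [Fintype G] (f : G → ℝ)

def sqShiftSum (c : G) : ℝ := ∑ j, (f (j + c) - f j) ^ 2

theorem sum_sq_sub_comp_add_eq_sqShiftSum (a b : G) :
    ∑ j, (f (j + a) - f (j + b)) ^ 2 = sqShiftSum f (a - b) :=
  Fintype.sum_equiv (Equiv.addRight b) _ _ fun j => by simp [add_add_sub_cancel]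

theorem sqShiftSum_neg (c : G) : sqShiftSum f (-c) = sqShiftSum f c := by
  rw [← zero_sub, ← sum_sq_sub_comp_add_eq_sqShiftSum, sqShiftSum]
  simp only [add_zero]
  exact Fintype.sum_congr _ _ fun j => by ring

theorem sum_sqShiftSum :
    ∑ c, sqShiftSum f c = 2 * Fintype.card G * ∑ j, f j ^ 2 - 2 * (∑ j, f j) ^ 2 := by
  have hshift (j : G) : ∑ c, f (j + c) = ∑ c, f c := Equiv.sum_comp (Equiv.addLeft j) f
  have hshift_sq (c : G) : ∑ j, f (j + c) ^ 2 = ∑ j, f j ^ 2 :=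
    Equiv.sum_comp (Equiv.addRight c) (f · ^ 2)
  calc ∑ c, sqShiftSum f c
      = ∑ c, ∑ j, f (j + c) ^ 2 - 2 * ∑ j, f j * ∑ c, f (j + c) + ∑ c, ∑ j, f j ^ 2 := by
        simp only [sqShiftSum, sub_sq, Finset.sum_add_distrib, Finset.sum_sub_distrib,
          Finset.mul_sum]
        rw [Finset.sum_comm (f := fun c j => 2 * f (j + c) * f j)]
        congr 1; congr 1
        exact Fintype.sum_congr _ _ fun j => Fintype.sum_congr _ _ fun c => by ring
    _ = 2 * Fintype.card G * ∑ j, f j ^ 2 - 2 * (∑ j, f j) ^ 2 := by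
        simp only [hshift, hshift_sq, ← Finset.sum_mul, Finset.sum_const, Finset.card_univ,
          nsmul_eq_mul]
        ring

end ShiftSum

theorem Fin.sum_range_natCast_mul_add {n : ℕ} [NeZero n] {M : Type*} [AddCommMonoid M]
    (g : Fin n → M) (q : ℕ) :
    ∑ k ∈ range n, g ((n * q + k : ℕ) : Fin n) = ∑ c, g c := by
  have hcast (k : ℕ) : ((n * q + k : ℕ) : Fin n) = k :=
    Fin.ext <| by rw [Fin.val_natCast, Fin.val_natCast, Nat.mul_add_mod]
  simp only [hcast, ← Fin.sum_univ_eq_sum_range (fun k => g k), Fin.cast_val_eq_self]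

theorem sum_sqShiftSum_uR_x : ∑ c, sqShiftSum (uR · 0) c = 32 := by
  rw [sum_sqShiftSum]
  simp [Fin.sum_univ_four, uR]
  norm_num

theorem sqShiftSum_uR_x_one : sqShiftSum (uR · 0) 1 = 8 := by
  simp [sqShiftSum, Fin.sum_univ_four, uR]
  norm_num

section Uncertainty

variable {ℏ m ε : ℝ} {σ : ℕ → Fin 4} {rt : ℕ → EuclideanSpace ℝ (Fin 2)}
  {r p : Fin 4 → ℕ → EuclideanSpace ℝ (Fin 2)}

theorem position_deviation_x
    (hr : ∀ j n, r j n = rt n + Real.sqrt (ℏ * ε / (4 * m)) • (uR (j + σ n) - uR j))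
    (j : Fin 4) (n : ℕ) :
    (r j n - rt n) 0 = Real.sqrt (ℏ * ε / (4 * m)) * (uR (j + σ n) 0 - uR j 0) := by
  simp [hr]

theorem momentum_deviation_x (hε : ε ≠ 0) {vt rt0 : EuclideanSpace ℝ (Fin 2)}
    (hrt : ∀ n, rt n = rt0 + ((n : ℝ) * ε) • vt)
    (hr : ∀ j n, r j n = rt n + Real.sqrt (ℏ * ε / (4 * m)) • (uR (j + σ n) - uR j))
    (hp : ∀ j n, p j n = (m / ε) • (r j (n + 1) - r j n)) (j : Fin 4) (n : ℕ) :
    (p j n - m • vt) 0 = m / ε * Real.sqrt (ℏ * ε / (4 * m)) *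
      (uR (j + σ (n + 1)) 0 - uR (j + σ n) 0) := by
  simp only [hp, hr, hrt, PiLp.sub_apply, PiLp.add_apply, PiLp.smul_apply, smul_eq_mul]
  push_cast
  field_simp
  ring

theorem variance_position_x (hℏ : 0 ≤ ℏ) (hm : 0 < m) (hε : 0 < ε)
    (hr : ∀ j n, r j n = rt n + Real.sqrt (ℏ * ε / (4 * m)) • (uR (j + σ n) - uR j)) (q : ℕ)
    (hσ : ∑ k ∈ range 4, sqShiftSum (uR · 0) (σ (4 * q + k)) = 32) :
    (1 / 16 : ℝ) * ∑ k ∈ range 4, ∑ j : Fin 4, ((r j (4 * q + k) - rt (4 * q + k)) 0) ^ 2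
      = ℏ * ε / (2 * m) := by
  have ha : Real.sqrt (ℏ * ε / (4 * m)) ^ 2 = ℏ * ε / (4 * m) := Real.sq_sqrt (by positivity)
  simp only [sqShiftSum] at hσ
  simp only [position_deviation_x hr, mul_pow, ← mul_sum, hσ, ha]
  field_simp
  ring

theorem variance_momentum_x (hℏ : 0 ≤ ℏ) (hm : 0 < m) (hε : 0 < ε)
    {vt rt0 : EuclideanSpace ℝ (Fin 2)} (hrt : ∀ n, rt n = rt0 + ((n : ℝ) * ε) • vt)
    (hr : ∀ j n, r j n = rt n + Real.sqrt (ℏ * ε / (4 * m)) • (uR (j + σ n) - uR j))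
    (hp : ∀ j n, p j n = (m / ε) • (r j (n + 1) - r j n))
    (hσ : ∀ n, sqShiftSum (uR · 0) (σ (n + 1) - σ n) = 8) (q : ℕ) :
    (1 / 16 : ℝ) * ∑ k ∈ range 4, ∑ j : Fin 4, ((p j (4 * q + k) - m • vt) 0) ^ 2
      = ℏ * m / (2 * ε) := by
  have ha : Real.sqrt (ℏ * ε / (4 * m)) ^ 2 = ℏ * ε / (4 * m) := Real.sq_sqrt (by positivity)
  simp only [momentum_deviation_x hε.ne' hrt hr hp, mul_pow, ← mul_sum,
    sum_sq_sub_comp_add_eq_sqShiftSum (uR · 0), hσ, ha, sum_const, card_range, nsmul_eq_mul]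
  field_simp
  ring

theorem sqrt_mul_sqrt_conjugate_variances (hℏ : 0 ≤ ℏ) (hm : 0 < m) (hε : 0 < ε) :
    Real.sqrt (ℏ * ε / (2 * m)) * Real.sqrt (ℏ * m / (2 * ε)) = ℏ / 2 := by
  rw [← Real.sqrt_mul (by positivity), ← Real.sqrt_sq (by positivity : 0 ≤ ℏ / 2)]
  congr 1
  field_simp

theorem uncertainty_relations_of_shift (hℏ : 0 < ℏ) (hm : 0 < m) (hε : 0 < ε)
    {vt rt0 : EuclideanSpace ℝ (Fin 2)} (hrt : ∀ n, rt n = rt0 + ((n : ℝ) * ε) • vt)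
    (hr : ∀ j n, r j n = rt n + Real.sqrt (ℏ * ε / (4 * m)) • (uR (j + σ n) - uR j))
    (hp : ∀ j n, p j n = (m / ε) • (r j (n + 1) - r j n)) (q : ℕ)
    (hσx : ∑ k ∈ range 4, sqShiftSum (uR · 0) (σ (4 * q + k)) = 32)
    (hσp : ∀ n, sqShiftSum (uR · 0) (σ (n + 1) - σ n) = 8) {Δx2 Δp2 : ℝ}
    (hΔx2 : Δx2 = (1 / 16 : ℝ) * ∑ k ∈ range 4, ∑ j : Fin 4,
      ((r j (4 * q + k) - rt (4 * q + k)) 0) ^ 2)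
    (hΔp2 : Δp2 = (1 / 16 : ℝ) * ∑ k ∈ range 4, ∑ j : Fin 4, ((p j (4 * q + k) - m • vt) 0) ^ 2) :
    Δx2 = ℏ * ε / (2 * m) ∧ Δp2 = ℏ * m / (2 * ε) ∧ Real.sqrt Δx2 * Real.sqrt Δp2 = ℏ / 2 := by
  have hx := hΔx2.trans (variance_position_x hℏ.le hm hε hr q hσx)
  have hp := hΔp2.trans (variance_momentum_x hℏ.le hm hε hrt hr hp hσp q)
  exact ⟨hx, hp, by rw [hx, hp, sqrt_mul_sqrt_conjugate_variances hℏ.le hm hε]⟩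

end Uncertainty

/-- Theorem 3, Heisenberg uncertainty relations: with
`⟨Δx⟩² = (1/16) Σ_{n=4q}^{4q+3} Σ_j ((r^j_n − r̃_n)_x)²` and
`⟨Δp_x⟩² = (1/16) Σ_{n=4q}^{4q+3} Σ_j ((p^j_n − mṽ)_x)²`, for every `ε > 0` and
both permutations `s⁺, s⁻` one has `⟨Δx⟩² = ℏε/(2m)`, `⟨Δp_x⟩² = ℏm/(2ε)` and
`⟨Δx⟩ ⟨Δp_x⟩ = ℏ/2`. -/
theorem heisenberg_uncertainty_relations
    (ℏ m ε : ℝ) (hℏ : 0 < ℏ) (hm : 0 < m) (hε : 0 < ε)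
    (q : ℕ) (vt rt0 : EuclideanSpace ℝ (Fin 2))
    (rt : ℕ → EuclideanSpace ℝ (Fin 2))
    (hrt : ∀ n, rt n = rt0 + ((n : ℝ) * ε) • vt)
    (rP rM pP pM : Fin 4 → ℕ → EuclideanSpace ℝ (Fin 2))
    (hrP : ∀ j n, rP j n = rt n + Real.sqrt (ℏ * ε / (4 * m)) • (sPlusIter n j - uR j))
    (hrM : ∀ j n, rM j n = rt n + Real.sqrt (ℏ * ε / (4 * m)) • (sMinusIter n j - uR j))
    (hpP : ∀ j n, pP j n = (m / ε) • (rP j (n + 1) - rP j n))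
    (hpM : ∀ j n, pM j n = (m / ε) • (rM j (n + 1) - rM j n))
    (Δx2P Δp2P Δx2M Δp2M : ℝ)
    (hΔx2P : Δx2P = (1 / 16 : ℝ) * ∑ k ∈ Finset.range 4, ∑ j : Fin 4,
      ((rP j (4 * q + k) - rt (4 * q + k)) 0) ^ 2)
    (hΔp2P : Δp2P = (1 / 16 : ℝ) * ∑ k ∈ Finset.range 4, ∑ j : Fin 4,
      ((pP j (4 * q + k) - m • vt) 0) ^ 2)
    (hΔx2M : Δx2M = (1 / 16 : ℝ) * ∑ k ∈ Finset.range 4, ∑ j : Fin 4,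
      ((rM j (4 * q + k) - rt (4 * q + k)) 0) ^ 2)
    (hΔp2M : Δp2M = (1 / 16 : ℝ) * ∑ k ∈ Finset.range 4, ∑ j : Fin 4,
      ((pM j (4 * q + k) - m • vt) 0) ^ 2) :
    Δx2P = ℏ * ε / (2 * m) ∧ Δp2P = ℏ * m / (2 * ε)
    ∧ Real.sqrt Δx2P * Real.sqrt Δp2P = ℏ / 2
    ∧ Δx2M = ℏ * ε / (2 * m) ∧ Δp2M = ℏ * m / (2 * ε)
    ∧ Real.sqrt Δx2M * Real.sqrt Δp2M = ℏ / 2 := by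
  have hσx : ∑ k ∈ range 4, sqShiftSum (uR · 0) ((4 * q + k : ℕ) : Fin 4) = 32 :=
    (Fin.sum_range_natCast_mul_add _ q).trans sum_sqShiftSum_uR_x
  have hstep (n : ℕ) : ((n + 1 : ℕ) : Fin 4) - n = 1 := by simp
  have hrM' (j : Fin 4) (n : ℕ) :
      rM j n = rt n + Real.sqrt (ℏ * ε / (4 * m)) • (uR (j + -(n : Fin 4)) - uR j) := by
    rw [hrM, sMinusIter, ← sub_eq_add_neg]
  have hplus := uncertainty_relations_of_shift (σ := fun n => n) hℏ hm hε hrt hrP hpP q hσx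
    (fun n => by rw [hstep, sqShiftSum_uR_x_one]) hΔx2P hΔp2P
  have hminus := uncertainty_relations_of_shift hℏ hm hε hrt hrM' hpM q
    (by simpa only [sqShiftSum_neg] using hσx)
    (fun n => by rw [neg_sub_neg, ← neg_sub, hstep, sqShiftSum_neg, sqShiftSum_uR_x_one])
    hΔx2M hΔp2M
  exact ⟨hplus.1, hplus.2.1, hplus.2.2, hminus⟩
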